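/- arXiv:2507.13475 — 4 statements merged into one kernel-verified Lean document; each statement's English description precedes it below -/
import Mathlib

section
/- Let H be a real Hilbert space, let E : H → ℝ be Fréchet differentiable with gradient ∇E, α-strongly convex and β-smooth, and let u* ∈ H be a global minimizer of E. Then for every step size τ with 0 < τ ≤ 1/β and every u ∈ H, one has E(u − τ·∇E(u)) − E(u*) ≤ (1 − α·τ·(2 − τ·β))·(E(u) − E(u*)). -/
/-!
Strong convexity bounds the suboptimality by the gradient (a Polyak–Łojasiewicz inequality),
`2α (E u - E u*) ≤ ‖∇E u‖²`, while the quadratic upper bound coming from the `β`-Lipschitz gradient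
shows that the step `u - τ ∇E u` decreases `E` by at least `τ (1 - τβ/2) ‖∇E u‖²`.
Combining the two gives the contraction factor `1 - ατ(2 - τβ)`.
-/

open scoped RealInnerProductSpace

section GradientDescent

variable {H : Type*} [NormedAddCommGroup H] [InnerProductSpace ℝ H] {E : H → ℝ} {E' : H → H}

/-- A Polyak–Łojasiewicz inequality. -/
theorem two_mul_sub_le_norm_sq_of_strongly_convex {α : ℝ} (hα : 0 ≤ α)
    (hconv : ∀ u v : H, E u + ⟪E' u, v - u⟫ + (α / 2) * ‖u - v‖ ^ 2 ≤ E v) (u v : H) :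
    2 * α * (E u - E v) ≤ ‖E' u‖ ^ 2 := by
  have h := hconv u v
  have hinner : -(‖E' u‖ * ‖u - v‖) ≤ ⟪E' u, v - u⟫ := by
    rw [norm_sub_rev]
    exact neg_le_of_abs_le (abs_real_inner_le_norm _ _)
  nlinarith [sq_nonneg (‖E' u‖ - α * ‖u - v‖)]

variable [CompleteSpace H]

theorem HasGradientAt.hasDerivAt_add_smul {u d : H} {t : ℝ}
    (h : HasGradientAt E (E' (u + t • d)) (u + t • d)) :
    HasDerivAt (fun s : ℝ => E (u + s • d)) ⟪E' (u + t • d), d⟫ t := by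
  have hline : HasDerivAt (fun s : ℝ => u + s • d) d t := by
    simpa using ((hasDerivAt_id t).smul_const d).const_add u
  simpa [Function.comp_def] using h.hasFDerivAt.comp_hasDerivAt t hline

/-- The descent lemma. -/
theorem le_add_inner_add_sq_of_lipschitz_gradient {β : ℝ}
    (hgrad : ∀ x, HasGradientAt E (E' x) x)
    (hsmooth : ∀ u u' : H, ‖E' u - E' u'‖ ≤ β * ‖u - u'‖) (u d : H) :
    E (u + d) ≤ E u + ⟪E' u, d⟫ + β / 2 * ‖d‖ ^ 2 := by
  set φ : ℝ → ℝ := fun t => E (u + t • d) - t * ⟪E' u, d⟫ - β / 2 * t ^ 2 * ‖d‖ ^ 2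
  have hφ : ∀ t : ℝ, HasDerivAt φ (⟪E' (u + t • d) - E' u, d⟫ - β * t * ‖d‖ ^ 2) t := by
    intro t
    have hquad := ((hasDerivAt_pow 2 t).const_mul (β / 2)).mul_const (‖d‖ ^ 2)
    refine ((((hgrad _).hasDerivAt_add_smul).sub
      ((hasDerivAt_id t).mul_const ⟪E' u, d⟫)).sub hquad).congr_deriv ?_
    simp only [inner_sub_left, one_mul]
    ring
  have hanti : AntitoneOn φ (Set.Icc 0 1) := by
    refine antitoneOn_of_deriv_nonpos (convex_Icc 0 1)
      (fun t _ => (hφ t).continuousAt.continuousWithinAt)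
      (fun t _ => (hφ t).differentiableAt.differentiableWithinAt) fun t ht => ?_
    rw [interior_Icc] at ht
    have hlip : ‖E' (u + t • d) - E' u‖ ≤ β * (t * ‖d‖) := by
      simpa [norm_smul, abs_of_pos ht.1] using hsmooth (u + t • d) u
    calc deriv φ t = ⟪E' (u + t • d) - E' u, d⟫ - β * t * ‖d‖ ^ 2 := (hφ t).deriv
      _ ≤ ‖E' (u + t • d) - E' u‖ * ‖d‖ - β * t * ‖d‖ ^ 2 := by
        gcongr; exact real_inner_le_norm _ _
      _ ≤ 0 := by nlinarith [mul_le_mul_of_nonneg_right hlip (norm_nonneg d)]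
  have h01 := hanti (Set.left_mem_Icc.mpr zero_le_one) (Set.right_mem_Icc.mpr zero_le_one)
    zero_le_one
  simp only [φ, zero_smul, add_zero, one_smul, one_pow, zero_pow two_ne_zero, one_mul,
    zero_mul, mul_zero, sub_zero] at h01
  linarith

theorem le_sub_mul_norm_sq_of_gradient_step {β τ : ℝ}
    (hgrad : ∀ x, HasGradientAt E (E' x) x)
    (hsmooth : ∀ u u' : H, ‖E' u - E' u'‖ ≤ β * ‖u - u'‖) (hτ0 : 0 ≤ τ) (u : H) :
    E (u - τ • E' u) ≤ E u - τ * (1 - τ * β / 2) * ‖E' u‖ ^ 2 := by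
  have h := le_add_inner_add_sq_of_lipschitz_gradient hgrad hsmooth u (-(τ • E' u))
  rw [← sub_eq_add_neg, inner_neg_right, real_inner_smul_right, real_inner_self_eq_norm_sq,
    norm_neg, norm_smul, Real.norm_eq_abs, abs_of_nonneg hτ0] at h
  linarith

end GradientDescent

theorem stmt0_general {H : Type*} [NormedAddCommGroup H] [InnerProductSpace ℝ H] [CompleteSpace H]
    (E : H → ℝ) (E' : H → H) (α β : ℝ) (hα : 0 < α) (hβ : 0 < β)
    (hgrad : ∀ x, HasGradientAt E (E' x) x)
    (hconv : ∀ u v : H, E u + ⟪E' u, v - u⟫ + (α / 2) * ‖u - v‖ ^ 2 ≤ E v)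
    (hsmooth : ∀ u u' : H, ‖E' u - E' u'‖ ≤ β * ‖u - u'‖)
    (ustar : H)
    (τ : ℝ) (hτ0 : 0 < τ) (hτ : τ ≤ 1 / β) (u : H) :
    E (u - τ • E' u) - E ustar ≤ (1 - α * τ * (2 - τ * β)) * (E u - E ustar) := by
  have hτβ : τ * β ≤ 1 := (le_div_iff₀ hβ).mp hτ
  have hstep := le_sub_mul_norm_sq_of_gradient_step hgrad hsmooth hτ0.le u
  have hPL := two_mul_sub_le_norm_sq_of_strongly_convex hα.le hconv u ustar
  have hcoef : 0 ≤ τ * (1 - τ * β / 2) := by nlinarith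
  nlinarith [mul_le_mul_of_nonneg_left hPL hcoef]

/-- energy decay of a gradient descent step for an `α`-strongly convex,
`β`-smooth energy on a real Hilbert space, with step size `0 < τ ≤ 1/β`. -/
theorem stmt0 {H : Type*} [NormedAddCommGroup H] [InnerProductSpace ℝ H] [CompleteSpace H]
    (E : H → ℝ) (E' : H → H) (α β : ℝ) (hα : 0 < α) (hβ : 0 < β)
    (hgrad : ∀ x, HasGradientAt E (E' x) x)
    (hconv : ∀ u v : H, E u + ⟪E' u, v - u⟫ + (α / 2) * ‖u - v‖ ^ 2 ≤ E v)
    (hsmooth : ∀ u u' : H, ‖E' u - E' u'‖ ≤ β * ‖u - u'‖)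
    (ustar : H) (hmin : ∀ v, E ustar ≤ E v)
    (τ : ℝ) (hτ0 : 0 < τ) (hτ : τ ≤ 1 / β) (u : H) :
    E (u - τ • E' u) - E ustar ≤ (1 - α * τ * (2 - τ * β)) * (E u - E ustar) :=
  stmt0_general E E' α β hα hβ hgrad hconv hsmooth ustar τ hτ0 hτ u
end

section
/- Let H be a real Hilbert space, let E : H → ℝ be Fréchet differentiable with gradient ∇E, α-strongly convex and β-smooth, and let u* be a global minimizer of E. Fix u ∈ H with E(u) > E(u*) and ∇E(u) ≠ 0, and suppose g ∈ H satisfies c₁‖g‖ ≤ ‖∇E(u)‖ ≤ c₂‖g‖ with 0 < c₁ ≤ c₂ and ⟨∇E(u), g⟩ ≥ c₃‖g‖·‖∇E(u)‖ with c₃ > 0. If 0 < τ < 2c₃c₁²/(c₂β), then E(u − τ·g) − E(u*) < E(u) − E(u*); that is, the step u ↦ u − τg strictly decreases the energy. -/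
open scoped RealInnerProductSpace

/-!
By the descent lemma, a `β`-Lipschitz gradient gives
`E (u - τ • g) ≤ E u - τ ⟪∇E u, g⟫ + β τ² ‖g‖² / 2`. The angle and norm conditions give
`⟪∇E u, g⟫ ≥ c₃ c₁ ‖g‖²`, and the step-size bound makes `β τ / 2 < c₃ c₁²/c₂ ≤ c₃ c₁`, so the
first-order decrease beats the quadratic error term as soon as `g ≠ 0`.
-/

section

variable {H : Type*} [NormedAddCommGroup H] [InnerProductSpace ℝ H] {E : H → ℝ} {E' : H → H}
  {β : ℝ}

theorem inner_gradient_add_smul_le (hsmooth : ∀ u u' : H, ‖E' u - E' u'‖ ≤ β * ‖u - u'‖)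
    (u d : H) {t : ℝ} (ht : 0 ≤ t) : ⟪E' (u + t • d), d⟫ ≤ ⟪E' u, d⟫ + β * t * ‖d‖ ^ 2 :=
  calc ⟪E' (u + t • d), d⟫ = ⟪E' u, d⟫ + ⟪E' (u + t • d) - E' u, d⟫ := by
        rw [inner_sub_left]; ring
    _ ≤ ⟪E' u, d⟫ + ‖E' (u + t • d) - E' u‖ * ‖d‖ := by gcongr; exact real_inner_le_norm _ _
    _ ≤ ⟪E' u, d⟫ + β * ‖t • d‖ * ‖d‖ := by gcongr; simpa using hsmooth (u + t • d) u
    _ = ⟪E' u, d⟫ + β * t * ‖d‖ ^ 2 := by rw [norm_smul, Real.norm_of_nonneg ht]; ring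

variable [CompleteSpace H]

theorem HasGradientAt.hasDerivAt_comp_add_smul {g u d : H} {t : ℝ}
    (h : HasGradientAt E g (u + t • d)) : HasDerivAt (fun s : ℝ => E (u + s • d)) ⟪g, d⟫ t := by
  have hline : HasDerivAt (fun s : ℝ => u + s • d) d t := by
    simpa using ((hasDerivAt_id t).smul_const d).const_add u
  have := h.hasFDerivAt.comp_hasDerivAt t hline
  simp only [InnerProductSpace.toDual_apply_apply] at this
  exact this

theorem le_add_inner_add_half_mul_sq_of_lipschitz_gradient
    (hgrad : ∀ x, HasGradientAt E (E' x) x)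
    (hsmooth : ∀ u u' : H, ‖E' u - E' u'‖ ≤ β * ‖u - u'‖) (u d : H) :
    E (u + d) ≤ E u + ⟪E' u, d⟫ + β / 2 * ‖d‖ ^ 2 := by
  have hf : ∀ t : ℝ, HasDerivAt (fun s : ℝ => E (u + s • d)) ⟪E' (u + t • d), d⟫ t :=
    fun t => (hgrad _).hasDerivAt_comp_add_smul
  have hB : ∀ t : ℝ, HasDerivAt (fun s : ℝ => E u + s * ⟪E' u, d⟫ + β / 2 * s ^ 2 * ‖d‖ ^ 2)
      (⟪E' u, d⟫ + β * t * ‖d‖ ^ 2) t := fun t => by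
    refine ((((hasDerivAt_id t).mul_const ⟪E' u, d⟫).const_add (E u)).add
      (((hasDerivAt_pow 2 t).const_mul (β / 2)).mul_const (‖d‖ ^ 2))).congr_deriv ?_
    simp only [one_mul, Nat.cast_ofNat]
    ring
  have hcomp := image_le_of_deriv_right_le_deriv_boundary
    (fun t _ => (hf t).continuousAt.continuousWithinAt) (fun t _ => (hf t).hasDerivWithinAt)
    (by simp) (fun t _ => (hB t).continuousAt.continuousWithinAt)
    (fun t _ => (hB t).hasDerivWithinAt)
    (fun t ht => inner_gradient_add_smul_le hsmooth u d ht.1) (Set.right_mem_Icc.2 zero_le_one)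
  simpa using hcomp

theorem image_sub_smul_lt_of_lipschitz_gradient
    (hgrad : ∀ x, HasGradientAt E (E' x) x)
    (hsmooth : ∀ u u' : H, ‖E' u - E' u'‖ ≤ β * ‖u - u'‖) {u g : H} {τ : ℝ} (hτ : 0 < τ)
    (hg : β * τ / 2 * ‖g‖ ^ 2 < ⟪E' u, g⟫) : E (u - τ • g) < E u := by
  have hdesc := le_add_inner_add_half_mul_sq_of_lipschitz_gradient hgrad hsmooth u (-(τ • g))
  rw [← sub_eq_add_neg, inner_neg_right, real_inner_smul_right, norm_neg, norm_smul,
    Real.norm_of_nonneg hτ.le] at hdesc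
  nlinarith

end

theorem stmt2_general {H : Type*} [NormedAddCommGroup H] [InnerProductSpace ℝ H] [CompleteSpace H]
    (E : H → ℝ) (E' : H → H) (β : ℝ) (hβ : 0 < β)
    (hgrad : ∀ x, HasGradientAt E (E' x) x)
    (hsmooth : ∀ u u' : H, ‖E' u - E' u'‖ ≤ β * ‖u - u'‖)
    (ustar : H)
    (u : H) (hu : E' u ≠ 0) (g : H) (c₁ c₂ c₃ : ℝ)
    (hc₁ : 0 < c₁) (hc₁₂ : c₁ ≤ c₂)
    (hlow : c₁ * ‖g‖ ≤ ‖E' u‖) (hup : ‖E' u‖ ≤ c₂ * ‖g‖)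
    (hc₃ : 0 < c₃) (halign : c₃ * ‖g‖ * ‖E' u‖ ≤ ⟪E' u, g⟫)
    (τ : ℝ) (hτ0 : 0 < τ) (hτ : τ < 2 * c₃ * c₁ ^ 2 / (c₂ * β)) :
    E (u - τ • g) - E ustar < E u - E ustar := by
  have hg : 0 < ‖g‖ := by
    refine norm_pos_iff.2 fun hg => hu (norm_le_zero_iff.1 ?_)
    simpa [hg] using hup
  have hc₂ : 0 < c₂ := hc₁.trans_le hc₁₂
  have hstep : β * τ / 2 < c₃ * c₁ := by
    have := (lt_div_iff₀ (by positivity)).1 hτ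
    nlinarith [mul_le_mul_of_nonneg_left hc₁₂ (mul_pos hc₃ hc₁).le]
  have hinner : c₃ * c₁ * ‖g‖ ^ 2 ≤ ⟪E' u, g⟫ :=
    calc c₃ * c₁ * ‖g‖ ^ 2 = c₃ * ‖g‖ * (c₁ * ‖g‖) := by ring
      _ ≤ c₃ * ‖g‖ * ‖E' u‖ := by gcongr
      _ ≤ ⟪E' u, g⟫ := halign
  rw [sub_lt_sub_iff_right]
  refine image_sub_smul_lt_of_lipschitz_gradient hgrad hsmooth hτ0 (lt_of_lt_of_le ?_ hinner)
  gcongr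

/-- strict energy decrease for a step along a perturbed gradient direction `g`,
for step sizes `0 < τ < 2c₃c₁²/(c₂β)`. -/
theorem stmt2 {H : Type*} [NormedAddCommGroup H] [InnerProductSpace ℝ H] [CompleteSpace H]
    (E : H → ℝ) (E' : H → H) (α β : ℝ) (hα : 0 < α) (hβ : 0 < β)
    (hgrad : ∀ x, HasGradientAt E (E' x) x)
    (hconv : ∀ u v : H, E u + ⟪E' u, v - u⟫ + (α / 2) * ‖u - v‖ ^ 2 ≤ E v)
    (hsmooth : ∀ u u' : H, ‖E' u - E' u'‖ ≤ β * ‖u - u'‖)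
    (ustar : H) (hmin : ∀ v, E ustar ≤ E v)
    (u : H) (hEu : E ustar < E u) (hu : E' u ≠ 0) (g : H) (c₁ c₂ c₃ : ℝ)
    (hc₁ : 0 < c₁) (hc₁₂ : c₁ ≤ c₂)
    (hlow : c₁ * ‖g‖ ≤ ‖E' u‖) (hup : ‖E' u‖ ≤ c₂ * ‖g‖)
    (hc₃ : 0 < c₃) (halign : c₃ * ‖g‖ * ‖E' u‖ ≤ ⟪E' u, g⟫)
    (τ : ℝ) (hτ0 : 0 < τ) (hτ : τ < 2 * c₃ * c₁ ^ 2 / (c₂ * β)) :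
    E (u - τ • g) - E ustar < E u - E ustar :=
  stmt2_general E E' β hβ hgrad hsmooth ustar u hu g c₁ c₂ c₃ hc₁ hc₁₂ hlow hup hc₃ halign τ hτ0 hτ
end

section
/- Let H be a real Hilbert space, let E : H → ℝ be Fréchet differentiable with gradient ∇E, α-strongly convex and β-smooth, and let u* be a global minimizer of E. Fix u ∈ H with ∇E(u) ≠ 0, let φ₁, …, φₙ be an orthonormal family in H, let s₁, …, sₙ > 0 and λ ≥ 0, set Eᵢ := ⟨∇E(u), φᵢ⟩, c₅ := minᵢ sᵢ²/(sᵢ² + λ²), and g := Σᵢ (sᵢ²/(sᵢ² + λ²))·Eᵢ·φᵢ. Assume there is c₄ > 0 with ‖Σᵢ Eᵢ·φᵢ‖ ≥ c₄·‖∇E(u)‖ and 0 < 2c₅c₄² < 1. Then for every τ with 0 < τ < c₅c₄²·(1 − √(1 − 2c₅c₄²))/β, one has E(u − τ·g) − E(u*) ≤ [1 − ατ·(c₅c₄²·(1 − √(1 − 2c₅c₄²)) − τβ)]·(E(u) − E(u*)), and this factor is strictly less than 1; in particular g is a descent direction. -/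
open scoped RealInnerProductSpace

lemma descent_lemma {H : Type*} [NormedAddCommGroup H] [InnerProductSpace ℝ H] [CompleteSpace H]
    (E : H → ℝ) (E' : H → H) (β : ℝ)
    (hgrad : ∀ x, HasGradientAt E (E' x) x)
    (hsmooth : ∀ u u' : H, ‖E' u - E' u'‖ ≤ β * ‖u - u'‖)
    (u v : H) : E v ≤ E u + ⟪E' u, v - u⟫ + β / 2 * ‖v - u‖ ^ 2 := by
  set d := v - u with hd
  set C := (⟪E' u, d⟫ : ℝ) with hC
  set K := ‖d‖ ^ 2 with hK
  set f : ℝ → ℝ := fun t => E (u + t • d) - t * C - β / 2 * K * t ^ 2 with hf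
  have hline : ∀ t : ℝ, HasDerivAt (fun t : ℝ => u + t • d) d t := by
    intro t
    simpa using ((hasDerivAt_id t).smul_const d).const_add u
  have hf' : ∀ t : ℝ, HasDerivAt f (⟪E' (u + t • d), d⟫ - C - β / 2 * K * (2 * t)) t := by
    intro t
    have h1 : HasDerivAt (fun t : ℝ => E (u + t • d))
        ((InnerProductSpace.toDual ℝ H (E' (u + t • d))) d) t :=
      (hgrad (u + t • d)).hasFDerivAt.comp_hasDerivAt t (hline t)
    rw [InnerProductSpace.toDual_apply_apply] at h1
    have h2 : HasDerivAt (fun t : ℝ => t * C) C t := by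
      simpa using (hasDerivAt_id t).mul_const C
    have h3 : HasDerivAt (fun t : ℝ => β / 2 * K * t ^ 2) (β / 2 * K * (2 * t)) t := by
      simpa [mul_comm] using (hasDerivAt_pow 2 t).const_mul (β / 2 * K)
    exact (h1.sub h2).sub h3
  have hdf : Differentiable ℝ f := fun t => (hf' t).differentiableAt
  have hderiv : ∀ t : ℝ, deriv f t = ⟪E' (u + t • d), d⟫ - C - β / 2 * K * (2 * t) :=
    fun t => (hf' t).deriv
  have hanti : AntitoneOn f (Set.Icc 0 1) := by
    apply antitoneOn_of_deriv_nonpos (convex_Icc 0 1) hdf.continuous.continuousOn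
      hdf.differentiableOn
    intro t ht
    rw [interior_Icc] at ht
    rw [hderiv t]
    have hb : ⟪E' (u + t • d) - E' u, d⟫ ≤ β * t * K := by
      calc ⟪E' (u + t • d) - E' u, d⟫ ≤ ‖E' (u + t • d) - E' u‖ * ‖d‖ :=
            real_inner_le_norm _ _
        _ ≤ (β * ‖(u + t • d) - u‖) * ‖d‖ := by
            have := hsmooth (u + t • d) u
            nlinarith [norm_nonneg d]
        _ = β * t * K := by
            rw [add_sub_cancel_left, norm_smul, Real.norm_eq_abs, abs_of_pos ht.1, hK]
            ring
    have hsplit : (⟪E' (u + t • d), d⟫ : ℝ) = ⟪E' (u + t • d) - E' u, d⟫ + C := by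
      rw [hC, inner_sub_left]; ring
    rw [hsplit]
    nlinarith
  have h01 : f 1 ≤ f 0 := hanti (Set.mem_Icc.2 ⟨le_refl 0, zero_le_one⟩)
      (Set.mem_Icc.2 ⟨zero_le_one, le_refl 1⟩) zero_le_one
  simp only [hf, one_smul, zero_smul, add_zero, one_pow, zero_pow, mul_zero, mul_one,
    zero_mul, sub_zero] at h01
  have huv : u + (v - u) = v := by abel
  rw [huv] at h01
  have h0 : (0:ℝ) ^ 2 = 0 := by norm_num
  rw [h0] at h01
  linarith


lemma pl_aux (α a b D R ip : ℝ) (hα : 0 < α)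
    (h : a + ip + α / 2 * R ^ 2 ≤ b) (hip : -(D * R) ≤ ip) :
    2 * α * (a - b) ≤ D ^ 2 := by
  nlinarith [sq_nonneg (D - α * R), mul_pos hα hα]

lemma chain_aux (α β τ κ r gap D2 P G2 EN : ℝ)
    (hα : 0 < α) (hβ : 0 < β) (hτ : 0 < τ) (hκ : 0 < κ) (hr0 : 0 ≤ r)
    (hdesc : EN ≤ gap - τ * P + β / 2 * τ ^ 2 * G2)
    (hPD : κ * D2 ≤ P) (hGD : G2 ≤ D2) (hPL : 2 * α * gap ≤ D2) (hgap0 : 0 ≤ gap)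
    (hτβ : τ * β < κ * (1 - r)) :
    EN ≤ (1 - α * τ * (κ * (1 - r) - τ * β)) * gap := by
  have e1 : τ * (κ * D2) ≤ τ * P := by nlinarith
  have e2 : β / 2 * τ ^ 2 * G2 ≤ β / 2 * τ ^ 2 * D2 :=
    mul_le_mul_of_nonneg_left hGD (by positivity)
  have hk2 : β * τ / 2 < κ := by nlinarith [mul_nonneg hκ.le hr0]
  have hcoef : 0 ≤ τ * (κ - β * τ / 2) := by nlinarith
  have e3 : τ * (κ - β * τ / 2) * (2 * α * gap) ≤ τ * (κ - β * τ / 2) * D2 :=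
    mul_le_mul_of_nonneg_left hPL hcoef
  have hslack : 0 ≤ α * τ * gap * (κ * (1 + r)) := by positivity
  nlinarith [e1, e2, e3, hslack, hdesc]

/-- energy decay for a step along the regularized projected gradient
`g = Σᵢ (sᵢ²/(sᵢ²+λ²)) Eᵢ φᵢ` under the alignment condition
`‖Σᵢ Eᵢ φᵢ‖ ≥ c₄ ‖∇E(u)‖`, with contraction factor strictly less than 1. -/
theorem stmt11 {H : Type*} [NormedAddCommGroup H] [InnerProductSpace ℝ H] [CompleteSpace H]
    (E : H → ℝ) (E' : H → H) (α β : ℝ) (hα : 0 < α) (hβ : 0 < β)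
    (hgrad : ∀ x, HasGradientAt E (E' x) x)
    (hconv : ∀ u v : H, E u + ⟪E' u, v - u⟫ + (α / 2) * ‖u - v‖ ^ 2 ≤ E v)
    (hsmooth : ∀ u u' : H, ‖E' u - E' u'‖ ≤ β * ‖u - u'‖)
    (ustar : H) (hmin : ∀ v, E ustar ≤ E v)
    (u : H) (hu : E' u ≠ 0)
    (n : ℕ) (φ : Fin n → H) (hφ : Orthonormal ℝ φ)
    (s : Fin n → ℝ) (hs : ∀ i, 0 < s i) (lam : ℝ) (hlam : 0 ≤ lam)
    (Ev : Fin n → ℝ) (hEv : ∀ i, Ev i = ⟪E' u, φ i⟫)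
    (c₅ : ℝ) (hc₅ : IsLeast (Set.range fun i => s i ^ 2 / (s i ^ 2 + lam ^ 2)) c₅)
    (g : H) (hg : g = ∑ i, ((s i ^ 2 / (s i ^ 2 + lam ^ 2)) * Ev i) • φ i)
    (c₄ : ℝ) (hc₄ : 0 < c₄)
    (hproj : c₄ * ‖E' u‖ ≤ ‖∑ i, Ev i • φ i‖)
    (hsmall : 0 < 2 * c₅ * c₄ ^ 2) (hsmall' : 2 * c₅ * c₄ ^ 2 < 1) :
    ∀ τ : ℝ, 0 < τ →
      τ < c₅ * c₄ ^ 2 * (1 - Real.sqrt (1 - 2 * c₅ * c₄ ^ 2)) / β →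
      E (u - τ • g) - E ustar ≤
          (1 - α * τ * (c₅ * c₄ ^ 2 * (1 - Real.sqrt (1 - 2 * c₅ * c₄ ^ 2)) - τ * β)) *
            (E u - E ustar) ∧
        (1 - α * τ * (c₅ * c₄ ^ 2 * (1 - Real.sqrt (1 - 2 * c₅ * c₄ ^ 2)) - τ * β)) < 1 := by
  intro τ hτ hτub
  set r := Real.sqrt (1 - 2 * c₅ * c₄ ^ 2) with hrdef
  have hr0 : 0 ≤ r := Real.sqrt_nonneg _
  have hr2 : r ^ 2 = 1 - 2 * c₅ * c₄ ^ 2 := Real.sq_sqrt (by linarith)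
  have hc5pos : 0 < c₅ := by nlinarith [sq_nonneg c₄]
  have hκ : 0 < c₅ * c₄ ^ 2 := by positivity
  have hr1 : r < 1 := by nlinarith
  have hτβ : τ * β < c₅ * c₄ ^ 2 * (1 - r) := (lt_div_iff₀ hβ).mp hτub
  have hwpos : ∀ i, 0 < s i ^ 2 / (s i ^ 2 + lam ^ 2) := fun i => by
    have := hs i
    positivity
  have hwle1 : ∀ i, s i ^ 2 / (s i ^ 2 + lam ^ 2) ≤ 1 := fun i => by
    have := hs i
    exact div_le_one_of_le₀ (by nlinarith [sq_nonneg lam]) (by positivity)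
  have hc5le : ∀ i, c₅ ≤ s i ^ 2 / (s i ^ 2 + lam ^ 2) := fun i => hc₅.2 ⟨i, rfl⟩
  have hSnorm : ‖∑ i, Ev i • φ i‖ ^ 2 = ∑ i, Ev i ^ 2 := by
    rw [← real_inner_self_eq_norm_sq]
    simpa [sq] using hφ.inner_sum Ev Ev Finset.univ
  have hSD2 : (∑ i, Ev i ^ 2) ≤ ‖E' u‖ ^ 2 := by
    have h := hφ.sum_inner_products_le (E' u) (s := Finset.univ)
    have he : ∀ i : Fin n, ‖(⟪φ i, E' u⟫ : ℝ)‖ ^ 2 = Ev i ^ 2 := by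
      intro i
      rw [hEv i, real_inner_comm, Real.norm_eq_abs, sq_abs]
    calc (∑ i, Ev i ^ 2) = ∑ i, ‖(⟪φ i, E' u⟫ : ℝ)‖ ^ 2 :=
          Finset.sum_congr rfl fun i _ => (he i).symm
      _ ≤ ‖E' u‖ ^ 2 := h
  have hSc4 : c₄ ^ 2 * ‖E' u‖ ^ 2 ≤ ∑ i, Ev i ^ 2 := by
    have h := mul_le_mul hproj hproj (by positivity) (norm_nonneg _)
    nlinarith [hSnorm]
  have hP : (⟪E' u, g⟫ : ℝ) = ∑ i, (s i ^ 2 / (s i ^ 2 + lam ^ 2)) * Ev i ^ 2 := by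
    rw [hg, inner_sum]
    refine Finset.sum_congr rfl fun i _ => ?_
    rw [real_inner_smul_right, ← hEv i]
    ring
  have hG2 : ‖g‖ ^ 2 = ∑ i, ((s i ^ 2 / (s i ^ 2 + lam ^ 2)) * Ev i) ^ 2 := by
    rw [hg, ← real_inner_self_eq_norm_sq,
      hφ.inner_sum (fun i => (s i ^ 2 / (s i ^ 2 + lam ^ 2)) * Ev i)
        (fun i => (s i ^ 2 / (s i ^ 2 + lam ^ 2)) * Ev i) Finset.univ]
    refine Finset.sum_congr rfl fun i _ => ?_
    simp [sq]
  have hPS : c₅ * (∑ i, Ev i ^ 2) ≤ ⟪E' u, g⟫ := by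
    rw [hP, Finset.mul_sum]
    exact Finset.sum_le_sum fun i _ =>
      mul_le_mul_of_nonneg_right (hc5le i) (sq_nonneg _)
  have hG2S : ‖g‖ ^ 2 ≤ ∑ i, Ev i ^ 2 := by
    rw [hG2]
    refine Finset.sum_le_sum fun i _ => ?_
    have h1 := hwpos i
    have h2 := hwle1 i
    have h3 : (s i ^ 2 / (s i ^ 2 + lam ^ 2)) ^ 2 ≤ 1 := by nlinarith
    calc ((s i ^ 2 / (s i ^ 2 + lam ^ 2)) * Ev i) ^ 2
        = (s i ^ 2 / (s i ^ 2 + lam ^ 2)) ^ 2 * Ev i ^ 2 := by ring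
      _ ≤ 1 * Ev i ^ 2 := mul_le_mul_of_nonneg_right h3 (sq_nonneg _)
      _ = Ev i ^ 2 := one_mul _
  have hPL : 2 * α * (E u - E ustar) ≤ ‖E' u‖ ^ 2 := by
    have h := hconv u ustar
    have hcs := abs_real_inner_le_norm (E' u) (ustar - u)
    have habs := (abs_le.mp hcs).1
    rw [norm_sub_rev ustar u] at habs
    exact pl_aux α (E u) (E ustar) (‖E' u‖) (‖u - ustar‖) _ hα h habs
  have hgap0 : 0 ≤ E u - E ustar := sub_nonneg.2 (hmin u)
  have hdesc := descent_lemma E E' β hgrad hsmooth u (u - τ • g)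
  have hsub : u - τ • g - u = -(τ • g) := by abel
  rw [hsub] at hdesc
  have hip : (⟪E' u, -(τ • g)⟫ : ℝ) = -(τ * ⟪E' u, g⟫) := by
    rw [inner_neg_right, real_inner_smul_right]
  have hnrm : ‖-(τ • g)‖ ^ 2 = τ ^ 2 * ‖g‖ ^ 2 := by
    rw [norm_neg, norm_smul, Real.norm_eq_abs, mul_pow, sq_abs]
  rw [hip, hnrm] at hdesc
  have hPD : c₅ * c₄ ^ 2 * ‖E' u‖ ^ 2 ≤ ⟪E' u, g⟫ := by
    calc c₅ * c₄ ^ 2 * ‖E' u‖ ^ 2 = c₅ * (c₄ ^ 2 * ‖E' u‖ ^ 2) := by ring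
      _ ≤ c₅ * (∑ i, Ev i ^ 2) := mul_le_mul_of_nonneg_left hSc4 hc5pos.le
      _ ≤ ⟪E' u, g⟫ := hPS
  have hGD : ‖g‖ ^ 2 ≤ ‖E' u‖ ^ 2 := le_trans hG2S hSD2
  have hdesc' : E (u - τ • g) - E ustar ≤
      (E u - E ustar) - τ * ⟪E' u, g⟫ + β / 2 * τ ^ 2 * ‖g‖ ^ 2 := by linarith
  constructor
  · exact chain_aux α β τ (c₅ * c₄ ^ 2) r (E u - E ustar) (‖E' u‖ ^ 2)
      (⟪E' u, g⟫) (‖g‖ ^ 2) (E (u - τ • g) - E ustar)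
      hα hβ hτ hκ hr0 hdesc' hPD hGD hPL hgap0 hτβ
  · have hpos : 0 < α * τ * (c₅ * c₄ ^ 2 * (1 - r) - τ * β) :=
      mul_pos (mul_pos hα hτ) (by linarith)
    linarith
end

section
/- Let n ∈ ℕ, let s, E ∈ ℝⁿ with sᵢ > 0 for all i, let τ > 0 and 0 < η < 1, and let {1, …, n} = I ∪ J be a partition into disjoint index sets with I nonempty. Assume sᵢ ≤ η for all i ∈ I and (Σ_{i∈J} Eᵢ²)^{1/2} ≤ η·(Σ_{i∈I} Eᵢ²)^{1/2}. Define q ∈ ℝⁿ by qᵢ = −τ·Eᵢ/sᵢ. Then ‖q‖ ≥ (Σ_{i∈I} qᵢ²)^{1/2} ≥ τ·η^{−1}·(Σ_{i∈I} Eᵢ²)^{1/2} ≥ τ·(1 + η²)^{−1/2}·η^{−1}·‖E‖, where ‖·‖ is the Euclidean norm on ℝⁿ. -/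
/-- if the energy of `E` concentrates on the indices `I` where the singular
values `sᵢ` are small (`sᵢ ≤ η`), then the unregularized coefficient vector
`qᵢ = −τ Eᵢ/sᵢ` is large: `‖q‖ ≥ ‖q|_I‖ ≥ τ η⁻¹ ‖E|_I‖ ≥ τ (1+η²)^{-1/2} η⁻¹ ‖E‖`. -/
theorem stmt12 (n : ℕ) (s E : Fin n → ℝ) (hs : ∀ i, 0 < s i)
    (τ : ℝ) (hτ : 0 < τ) (η : ℝ) (hη0 : 0 < η) (hη1 : η < 1)
    (I J : Finset (Fin n)) (hdisj : Disjoint I J) (hcover : I ∪ J = Finset.univ)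
    (hI : I.Nonempty)
    (hsI : ∀ i ∈ I, s i ≤ η)
    (hEJ : Real.sqrt (∑ i ∈ J, (E i) ^ 2) ≤ η * Real.sqrt (∑ i ∈ I, (E i) ^ 2))
    (q : Fin n → ℝ) (hq : ∀ i, q i = -τ * E i / s i) :
    Real.sqrt (∑ i ∈ I, (q i) ^ 2) ≤ Real.sqrt (∑ i, (q i) ^ 2) ∧
    τ * η⁻¹ * Real.sqrt (∑ i ∈ I, (E i) ^ 2) ≤ Real.sqrt (∑ i ∈ I, (q i) ^ 2) ∧
    τ * (Real.sqrt (1 + η ^ 2))⁻¹ * η⁻¹ * Real.sqrt (∑ i, (E i) ^ 2) ≤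
      τ * η⁻¹ * Real.sqrt (∑ i ∈ I, (E i) ^ 2) := by
  have hIJ : (∑ i, (E i) ^ 2) = (∑ i ∈ I, (E i) ^ 2) + (∑ i ∈ J, (E i) ^ 2) := by
    rw [← Finset.sum_union hdisj, hcover]
  have hEInn : 0 ≤ ∑ i ∈ I, (E i) ^ 2 := Finset.sum_nonneg fun i _ => sq_nonneg _
  have hEJnn : 0 ≤ ∑ i ∈ J, (E i) ^ 2 := Finset.sum_nonneg fun i _ => sq_nonneg _
  have hJle : (∑ i ∈ J, (E i) ^ 2) ≤ η ^ 2 * (∑ i ∈ I, (E i) ^ 2) := by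
    have := mul_self_le_mul_self (Real.sqrt_nonneg _) hEJ
    rwa [Real.mul_self_sqrt hEJnn, mul_mul_mul_comm, Real.mul_self_sqrt hEInn,
      ← sq] at this
  refine ⟨?_, ?_, ?_⟩
  · apply Real.sqrt_le_sqrt
    exact Finset.sum_le_sum_of_subset_of_nonneg (Finset.subset_univ I)
      (fun i _ _ => sq_nonneg _)
  · have key : (τ * η⁻¹) ^ 2 * (∑ i ∈ I, (E i) ^ 2) ≤ ∑ i ∈ I, (q i) ^ 2 := by
      rw [Finset.mul_sum]
      apply Finset.sum_le_sum
      intro i hi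
      have hsi := hs i
      have hsη := hsI i hi
      rw [hq i, div_pow, le_div_iff₀ (by positivity)]
      have hs2 : s i ^ 2 ≤ η ^ 2 := by nlinarith
      have hinv : η⁻¹ ^ 2 * s i ^ 2 ≤ 1 := by
        rw [← mul_pow, ← one_pow 2]
        apply pow_le_pow_left₀ (by positivity)
        rw [inv_mul_le_iff₀ hη0, mul_one]; exact hsη
      nlinarith [sq_nonneg (τ * E i), mul_nonneg (sq_nonneg τ) (sq_nonneg (E i))]
    calc τ * η⁻¹ * Real.sqrt (∑ i ∈ I, (E i) ^ 2)
        = Real.sqrt ((τ * η⁻¹) ^ 2 * (∑ i ∈ I, (E i) ^ 2)) := by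
          rw [Real.sqrt_mul (sq_nonneg _), Real.sqrt_sq (by positivity)]
      _ ≤ Real.sqrt (∑ i ∈ I, (q i) ^ 2) := Real.sqrt_le_sqrt key
  · have h2 : Real.sqrt (∑ i, (E i) ^ 2) ≤
        Real.sqrt (1 + η ^ 2) * Real.sqrt (∑ i ∈ I, (E i) ^ 2) := by
      rw [← Real.sqrt_mul (by positivity)]
      apply Real.sqrt_le_sqrt
      rw [hIJ]; nlinarith
    have hpos : (0:ℝ) < Real.sqrt (1 + η ^ 2) := Real.sqrt_pos.mpr (by positivity)
    have h3 : (Real.sqrt (1 + η ^ 2))⁻¹ * Real.sqrt (∑ i, (E i) ^ 2) ≤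
        Real.sqrt (∑ i ∈ I, (E i) ^ 2) := by
      rw [inv_mul_le_iff₀ hpos]; linarith [h2]
    calc τ * (Real.sqrt (1 + η ^ 2))⁻¹ * η⁻¹ * Real.sqrt (∑ i, (E i) ^ 2)
        = τ * η⁻¹ * ((Real.sqrt (1 + η ^ 2))⁻¹ * Real.sqrt (∑ i, (E i) ^ 2)) := by ring
      _ ≤ τ * η⁻¹ * Real.sqrt (∑ i ∈ I, (E i) ^ 2) :=
          mul_le_mul_of_nonneg_left h3 (by positivity)
end
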